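/- If T : C(X) → C(X) is fully order preserving, then for each fixed u ∈ X* the function α ↦ γ(u,α) (the additive constant of T(h_{u,α})) is strictly increasing and a bijection of ℝ. -/
import Mathlib


open Set

noncomputable section

variable {X : Type*}

/-- The class of proper, lower semicontinuous, convex functions `X → ℝ ∪ {+∞}`,
encoded as `EReal`-valued functions never taking the value `⊥`. -/
def IsClFun (X : Type*) [NormedAddCommGroup X] [NormedSpace ℝ X] (f : X → EReal) : Prop :=
  (∀ x, f x ≠ ⊥) ∧ (∃ x, f x ≠ ⊤) ∧ LowerSemicontinuous f ∧
  ∀ x y : X, ∀ a b : ℝ, 0 ≤ a → 0 ≤ b → a + b = 1 →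
    f (a • x + b • y) ≤ (a : EReal) * f x + (b : EReal) * f y

/-- `C(X)`, as a subtype. -/
abbrev Cl (X : Type*) [NormedAddCommGroup X] [NormedSpace ℝ X] :=
  {f : X → EReal // IsClFun X f}

/-- The continuous affine function `h_{u,α}(x) = ⟨u,x⟩ + α`. -/
def aff [NormedAddCommGroup X] [NormedSpace ℝ X] (u : X →L[ℝ] ℝ) (α : ℝ) : X → EReal :=
  fun x => ((u x + α : ℝ) : EReal)

theorem affMem [NormedAddCommGroup X] [NormedSpace ℝ X] (u : X →L[ℝ] ℝ) (α : ℝ) :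
    IsClFun X (aff u α) := by
  refine ⟨fun x => EReal.coe_ne_bot _, ⟨0, EReal.coe_ne_top _⟩, ?_, ?_⟩
  · exact (continuous_coe_real_ereal.comp (by continuity)).lowerSemicontinuous
  · intro x y a b ha hb hab
    simp only [aff, map_add, map_smul, smul_eq_mul]
    rw [← EReal.coe_mul, ← EReal.coe_mul, ← EReal.coe_add, EReal.coe_le_coe_iff]
    have h : a * α + b * α = α := by rw [← add_mul, hab, one_mul]
    nlinarith

/-- `h_{u,α}` as an element of `C(X)`. -/
def affCl [NormedAddCommGroup X] [NormedSpace ℝ X] (u : X →L[ℝ] ℝ) (α : ℝ) : Cl X :=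
  ⟨aff u α, affMem u α⟩

/-- An operator on `C(X)` is fully order preserving if it is onto and
`f ≤ g ↔ T f ≤ T g` (pointwise order). -/
def FullyOrderPreserving [NormedAddCommGroup X] [NormedSpace ℝ X]
    (T : Cl X → Cl X) : Prop :=
  Function.Surjective T ∧ ∀ f g : Cl X, f.1 ≤ g.1 ↔ (T f).1 ≤ (T g).1

lemma aff_le_aff_iff [NormedAddCommGroup X] [NormedSpace ℝ X] (u : X →L[ℝ] ℝ) (α β : ℝ) :
    aff u α ≤ aff u β ↔ α ≤ β := by
  constructor
  · intro h
    have := h 0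
    simp only [aff, map_zero, zero_add, EReal.coe_le_coe_iff] at this
    exact this
  · intro h x
    simp only [aff, EReal.coe_le_coe_iff]
    linarith

theorem constant_part_strictMono_bijective
    [NormedAddCommGroup X] [NormedSpace ℝ X] [CompleteSpace X]
    (T : Cl X → Cl X) (hT : FullyOrderPreserving T)
    (y : (X →L[ℝ] ℝ) → (X →L[ℝ] ℝ)) (γ : (X →L[ℝ] ℝ) → ℝ → ℝ)
    (hy : Function.Bijective y)
    (hrep : ∀ (u : X →L[ℝ] ℝ) (α : ℝ), (T (affCl u α)).1 = aff (y u) (γ u α)) :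
    ∀ u : X →L[ℝ] ℝ, StrictMono (γ u) ∧ Function.Bijective (γ u) := by

  intro u
  have key : ∀ α β : ℝ, α ≤ β ↔ γ u α ≤ γ u β := by
    intro α β
    rw [← aff_le_aff_iff u α β]
    rw [show (aff u α ≤ aff u β) = ((affCl u α).1 ≤ (affCl u β).1) from rfl]
    rw [hT.2, hrep, hrep, aff_le_aff_iff]
  have mono : Monotone (γ u) := fun a b h => (key a b).1 h
  have inj : Function.Injective (γ u) := fun a b h =>
    le_antisymm ((key a b).2 h.le) ((key b a).2 h.ge)
  have smono : StrictMono (γ u) := mono.strictMono_of_injective inj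
  refine ⟨smono, inj, ?_⟩
  intro β
  obtain ⟨f, hf⟩ := hT.1 (affCl (y u) β)
  have hfβ : (T f).1 = aff (y u) β := by rw [hf]; rfl
  have hle : ∀ α : ℝ, f.1 ≤ (affCl u α).1 ↔ β ≤ γ u α := by
    intro α
    rw [hT.2, hfβ, hrep, aff_le_aff_iff]
  have hge : ∀ α : ℝ, (affCl u α).1 ≤ f.1 ↔ γ u α ≤ β := by
    intro α
    rw [hT.2, hfβ, hrep, aff_le_aff_iff]
  -- the set of α with γ u α ≤ β
  set A : Set ℝ := {α | γ u α ≤ β} with hA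
  have hAne : A.Nonempty := by
    by_contra hne
    have hall : ∀ α : ℝ, f.1 ≤ (affCl u α).1 := by
      intro α
      exact (hle α).2 (le_of_lt (lt_of_not_ge (fun h => hne ⟨α, Set.mem_setOf.2 h⟩)))
    have hbot : f.1 0 = ⊥ := by
      rw [EReal.eq_bot_iff_forall_lt]
      intro r
      have := hall (r - 1) 0
      simp only [affCl, aff, map_zero, zero_add] at this
      exact lt_of_le_of_lt this (by exact_mod_cast (by linarith : r - 1 < r))
    exact f.2.1 0 hbot
  have hAbdd : BddAbove A := by
    by_contra hbdd
    have hall : ∀ α : ℝ, ∃ α' ≥ α, γ u α' ≤ β := by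
      intro α
      rw [not_bddAbove_iff] at hbdd
      obtain ⟨α', hα', hgt⟩ := hbdd α
      exact ⟨α', hgt.le, hα'⟩
    obtain ⟨x₀, hx₀⟩ := f.2.2.1
    have htop : f.1 x₀ = ⊤ := by
      rw [EReal.eq_top_iff_forall_lt]
      intro r
      obtain ⟨α', hge', hle'⟩ := hall (r - u x₀ + 1)
      have := (hge α').2 hle' x₀
      simp only [affCl, aff] at this
      refine lt_of_lt_of_le ?_ this
      exact_mod_cast (by linarith : r < u x₀ + α')
    exact hx₀ htop
  set s : ℝ := sSup A with hs
  refine ⟨s, ?_⟩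
  have hfs : f = affCl u s := by
    apply Subtype.ext
    funext x
    have hupper : ∀ α : ℝ, s < α → f.1 x ≤ ((u x + α : ℝ) : EReal) := by
      intro α hα
      have hnotA : ¬ γ u α ≤ β := by
        intro h
        exact absurd (le_csSup hAbdd (Set.mem_setOf.2 h)) (not_le.2 hα)
      have := (hle α).2 (le_of_lt (lt_of_not_ge hnotA)) x
      simpa only [affCl, aff] using this
    have hlower : ∀ α ∈ A, ((u x + α : ℝ) : EReal) ≤ f.1 x := by
      intro α hα
      have := (hge α).2 hα x
      simpa only [affCl, aff] using this
    have hnt : f.1 x ≠ ⊤ := by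
      intro h
      have := hupper (s + 1) (by linarith)
      rw [h] at this
      exact absurd (top_le_iff.1 this) (EReal.coe_ne_top _)
    have hnb : f.1 x ≠ ⊥ := f.2.1 x
    lift f.1 x to ℝ using ⟨hnt, hnb⟩ with r hr
    have h1 : u x + s ≤ r := by
      have : s ≤ r - u x := by
        apply csSup_le hAne
        intro α hα
        have := hlower α hα
        rw [EReal.coe_le_coe_iff] at this
        linarith
      linarith
    have h2 : r ≤ u x + s := by
      apply le_of_forall_pos_le_add
      intro ε hε
      have := hupper (s + ε) (by linarith)
      rw [EReal.coe_le_coe_iff] at this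
      linarith
    show ((r : ℝ) : EReal) = aff u s x
    simp only [aff, EReal.coe_eq_coe_iff]
    linarith
  have : aff (y u) (γ u s) = aff (y u) β := by
    rw [← hrep, ← hfs, hfβ]
  have h0 := congrFun this 0
  simp only [aff, map_zero, zero_add, EReal.coe_eq_coe_iff] at h0
  exact h0
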